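/- Let u₁, u₂, u₁', u₂' : ℝⁿ → ℝ be bounded measurable integrable functions with u₁ + u₂ = u₁' + u₂' almost everywhere, and let t > 0. Then ∫ u₁' (G_t*u₂) + ∫ u₂' (G_t*u₁) − ∫ u₁' (G_t*u₂') − ∫ u₁ (G_t*u₂) = ∫ (u₁' − u₁) (G_t * (u₁' − u₁)) ≥ 0. -/

import Mathlib

/-!
Since `G_t` is bounded, Fubini applies to `f(x) G_t(x - y) g(y)` for integrable `f, g`, so the
pairing `B(f, g) = ∫ f (G_t * g)` is bilinear on integrable functions and, `G_t` being even,
symmetric. With `v = u₁' - u₁`, which equals `u₂ - u₂'` almost everywhere, the left-hand side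
collapses to `B(u₁', v) - B(u₁, v) = B(v, v)`. Nonnegativity comes from the semigroup law
`G_{t/2} * G_{t/2} = G_t`, obtained by completing the square in the exponent (Apollonius'
identity for the midpoint): `B(v, v) = B(G_{t/2} * v, G_{t/2} * v) = ∫ (G_{t/2} * v)²`.
-/

open MeasureTheory Real Set

/-- The Gaussian (heat) kernel `G_t(x) = (4πt)^{-n/2} exp(-|x|²/(4t))` on `ℝⁿ`. -/
noncomputable def gauss (n : ℕ) (t : ℝ) (x : EuclideanSpace ℝ (Fin n)) : ℝ :=
  (4 * Real.pi * t) ^ (-(n : ℝ) / 2) * Real.exp (-‖x‖ ^ 2 / (4 * t))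

/-- Convolution with the Gaussian kernel: `(G_t * f)(x) = ∫ G_t(x - y) f(y) dy`. -/
noncomputable def gconv (n : ℕ) (t : ℝ) (f : EuclideanSpace ℝ (Fin n) → ℝ)
    (x : EuclideanSpace ℝ (Fin n)) : ℝ :=
  ∫ y, gauss n t (x - y) * f y

open Filter

section KernelIntegrals

variable {E : Type*} [NormedAddCommGroup E] [MeasurableSpace E] [BorelSpace E] {μ : Measure E}
  {k f g : E → ℝ} {C : ℝ}

theorem integrable_kernel_mul (hk : Continuous k) (hkC : ∀ z, |k z| ≤ C)
    (hg : Integrable g μ) (x : E) : Integrable (fun y => k (x - y) * g y) μ :=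
  hg.bdd_mul (hk.comp (continuous_sub_left x)).aestronglyMeasurable
    (Eventually.of_forall fun y => hkC (x - y))

theorem integral_kernel_mul_sub (hk : Continuous k) (hkC : ∀ z, |k z| ≤ C) {g' : E → ℝ}
    (hg : Integrable g μ) (hg' : Integrable g' μ) (x : E) :
    ∫ y, k (x - y) * (g y - g' y) ∂μ = ∫ y, k (x - y) * g y ∂μ - ∫ y, k (x - y) * g' y ∂μ := by
  simp only [mul_sub]
  exact integral_sub (integrable_kernel_mul hk hkC hg x) (integrable_kernel_mul hk hkC hg' x)

variable [SecondCountableTopology E]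

theorem integrable_mul_kernel_mul_prod (hk : Continuous k) (hkC : ∀ z, |k z| ≤ C)
    (hf : Integrable f μ) (hg : Integrable g μ) :
    Integrable (fun p : E × E => f p.1 * (k (p.1 - p.2) * g p.2)) (μ.prod μ) := by
  refine ((hf.mul_prod hg).norm.const_mul C).mono'
    (hf.1.comp_fst.mul (((hk.comp continuous_sub).aestronglyMeasurable).mul hg.1.comp_snd))
    (Eventually.of_forall fun p => ?_)
  calc ‖f p.1 * (k (p.1 - p.2) * g p.2)‖ = |f p.1| * (|k (p.1 - p.2)| * |g p.2|) := by
        simp only [norm_mul, Real.norm_eq_abs]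
    _ ≤ |f p.1| * (C * |g p.2|) := by gcongr; exact hkC _
    _ = C * ‖f p.1 * g p.2‖ := by rw [Real.norm_eq_abs, abs_mul]; ring

variable [SFinite μ]

theorem integrable_mul_integral_kernel_mul (hk : Continuous k) (hkC : ∀ z, |k z| ≤ C)
    (hf : Integrable f μ) (hg : Integrable g μ) :
    Integrable (fun x => f x * ∫ y, k (x - y) * g y ∂μ) μ := by
  simpa only [integral_const_mul] using
    (integrable_mul_kernel_mul_prod hk hkC hf hg).integral_prod_left

theorem integral_mul_integral_kernel_mul_swap (hk : Continuous k) (hkC : ∀ z, |k z| ≤ C)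
    (hf : Integrable f μ) (hg : Integrable g μ) :
    ∫ x, f x * ∫ y, k (x - y) * g y ∂μ ∂μ = ∫ y, (∫ x, f x * k (x - y) ∂μ) * g y ∂μ := by
  simp only [← integral_const_mul, ← integral_mul_const, mul_assoc]
  exact integral_integral_swap (integrable_mul_kernel_mul_prod hk hkC hf hg)

theorem integrable_integral_kernel_mul [μ.IsAddRightInvariant] (hk : Integrable k μ)
    (hg : Integrable g μ) : Integrable (fun x => ∫ y, k (x - y) * g y ∂μ) μ := by
  simpa only [ContinuousLinearMap.mul_apply', mul_comm (g _)] using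
    (hg.convolution_integrand (ContinuousLinearMap.mul ℝ ℝ) hk).integral_prod_left

end KernelIntegrals

section Gaussian

variable {n : ℕ} {s t : ℝ}

local notation "ℝⁿ" => EuclideanSpace ℝ (Fin n)

theorem gauss_eq (x : ℝⁿ) :
    gauss n t x = (4 * π * t) ^ (-(n : ℝ) / 2) * exp (-(4 * t)⁻¹ * ‖x‖ ^ 2) := by
  rw [gauss]
  ring_nf

theorem continuous_gauss : Continuous (gauss n t) := by
  unfold gauss
  fun_prop

theorem abs_gauss_le (ht : 0 ≤ t) (x : ℝⁿ) : |gauss n t x| ≤ (4 * π * t) ^ (-(n : ℝ) / 2) := by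
  have hK : 0 ≤ (4 * π * t) ^ (-(n : ℝ) / 2) := by positivity
  have hexp : exp (-‖x‖ ^ 2 / (4 * t)) ≤ 1 := exp_le_one_iff.2 <|
    div_nonpos_of_nonpos_of_nonneg (neg_nonpos.2 (by positivity)) (by positivity)
  rw [gauss, abs_of_nonneg (by positivity)]
  exact mul_le_of_le_one_right hK hexp

theorem integral_gauss (ht : 0 < t) : ∫ x : ℝⁿ, gauss n t x = 1 := by
  have h4πt : 0 < 4 * π * t := by positivity
  simp_rw [gauss_eq, integral_const_mul]
  rw [GaussianFourier.integral_rexp_neg_mul_sq_norm (by positivity), finrank_euclideanSpace_fin,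
    div_inv_eq_mul, show π * (4 * t) = 4 * π * t by ring, ← rpow_add h4πt, neg_div,
    neg_add_cancel, rpow_zero]

theorem integrable_gauss (ht : 0 < t) : Integrable (gauss n t) :=
  .of_integral_ne_zero (by rw [integral_gauss ht]; exact one_ne_zero)

theorem gauss_mul_gauss (hs : 0 < s) (x y z : ℝⁿ) :
    gauss n s (x - z) * gauss n s (z - y) =
      gauss n (2 * s) (x - y) * gauss n (s / 2) (z - midpoint ℝ x y) := by
  have hconst : (4 * π * s) ^ (-(n : ℝ) / 2) * (4 * π * s) ^ (-(n : ℝ) / 2) =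
      (4 * π * (2 * s)) ^ (-(n : ℝ) / 2) * (4 * π * (s / 2)) ^ (-(n : ℝ) / 2) := by
    rw [← mul_rpow, ← mul_rpow]
    · ring_nf
    all_goals positivity
  have hapollonius :=
    EuclideanGeometry.dist_sq_add_dist_sq_eq_two_mul_dist_midpoint_sq_add_half_dist_sq z x y
  rw [dist_eq_norm, dist_eq_norm, dist_eq_norm, dist_eq_norm, norm_sub_rev z x] at hapollonius
  have hexp : exp (-‖x - z‖ ^ 2 / (4 * s)) * exp (-‖z - y‖ ^ 2 / (4 * s)) =
      exp (-‖x - y‖ ^ 2 / (4 * (2 * s))) * exp (-‖z - midpoint ℝ x y‖ ^ 2 / (4 * (s / 2))) := by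
    rw [← exp_add, ← exp_add]
    congr 1
    field_simp
    linear_combination (-2) * hapollonius
  simp only [gauss]
  linear_combination exp (-‖x - z‖ ^ 2 / (4 * s)) * exp (-‖z - y‖ ^ 2 / (4 * s)) * hconst +
    (4 * π * (2 * s)) ^ (-(n : ℝ) / 2) * (4 * π * (s / 2)) ^ (-(n : ℝ) / 2) * hexp

theorem gauss_sub_comm (x y : ℝⁿ) : gauss n t (x - y) = gauss n t (y - x) := by
  rw [gauss, gauss, norm_sub_rev]

theorem integral_gauss_mul_gauss (hs : 0 < s) (x y : ℝⁿ) :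
    ∫ z, gauss n s (x - z) * gauss n s (z - y) = gauss n (2 * s) (x - y) := by
  simp_rw [gauss_mul_gauss hs, integral_const_mul,
    integral_sub_right_eq_self (gauss n (s / 2)), integral_gauss (half_pos hs), mul_one]

variable {f f' g g' : EuclideanSpace ℝ (Fin n) → ℝ}

theorem integrable_mul_gconv (ht : 0 ≤ t) (hf : Integrable f) (hg : Integrable g) :
    Integrable (fun x => f x * gconv n t g x) :=
  integrable_mul_integral_kernel_mul continuous_gauss (abs_gauss_le ht) hf hg

theorem integrable_gconv (ht : 0 < t) (hg : Integrable g) : Integrable (gconv n t g) :=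
  integrable_integral_kernel_mul (integrable_gauss ht) hg

theorem gconv_sub (ht : 0 ≤ t) (hg : Integrable g) (hg' : Integrable g') (x : ℝⁿ) :
    gconv n t (fun y => g y - g' y) x = gconv n t g x - gconv n t g' x :=
  integral_kernel_mul_sub continuous_gauss (abs_gauss_le ht) hg hg' x

theorem gconv_congr_ae (h : g =ᵐ[volume] g') : gconv n t g = gconv n t g' :=
  funext fun _ => integral_congr_ae (h.mono fun y hy => by simp only [hy])

theorem integral_sub_mul_gconv (ht : 0 ≤ t) (hf : Integrable f) (hf' : Integrable f')
    (hg : Integrable g) :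
    ∫ x, (f x - f' x) * gconv n t g x =
      (∫ x, f x * gconv n t g x) - ∫ x, f' x * gconv n t g x := by
  simp_rw [sub_mul]
  exact integral_sub (integrable_mul_gconv ht hf hg) (integrable_mul_gconv ht hf' hg)

theorem integral_mul_gconv_sub (ht : 0 ≤ t) (hf : Integrable f) (hg : Integrable g)
    (hg' : Integrable g') :
    ∫ x, f x * gconv n t (fun y => g y - g' y) x =
      (∫ x, f x * gconv n t g x) - ∫ x, f x * gconv n t g' x := by
  simp_rw [gconv_sub ht hg hg', mul_sub]
  exact integral_sub (integrable_mul_gconv ht hf hg) (integrable_mul_gconv ht hf hg')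

theorem integral_mul_gconv_comm (ht : 0 ≤ t) (hf : Integrable f) (hg : Integrable g) :
    ∫ x, f x * gconv n t g x = ∫ x, g x * gconv n t f x := by
  simp only [gconv]
  rw [integral_mul_integral_kernel_mul_swap continuous_gauss (abs_gauss_le ht) hf hg]
  simp_rw [mul_comm _ (g _), mul_comm (f _), gauss_sub_comm]

theorem gconv_gconv (hs : 0 < s) (hg : Integrable g) (x : ℝⁿ) :
    gconv n s (gconv n s g) x = gconv n (2 * s) g x := by
  have hgauss_x : Integrable (fun z => gauss n s (x - z)) := (integrable_gauss hs).comp_sub_left x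
  simp only [gconv]
  rw [integral_mul_integral_kernel_mul_swap continuous_gauss (abs_gauss_le hs.le) hgauss_x hg]
  simp_rw [integral_gauss_mul_gauss hs]

theorem integral_mul_gconv_self_nonneg (ht : 0 < t) (hg : Integrable g) :
    0 ≤ ∫ x, g x * gconv n t g x := by
  have hs : 0 < t / 2 := half_pos ht
  have hsemigroup : gconv n t g = gconv n (t / 2) (gconv n (t / 2) g) := by
    ext x
    rw [gconv_gconv hs hg, mul_div_cancel₀ t two_ne_zero]
  rw [hsemigroup, integral_mul_gconv_comm hs.le hg (integrable_gconv hs hg)]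
  exact integral_nonneg fun x => mul_self_nonneg _

end Gaussian

theorem gaussian_cross_term_identity_general (n : ℕ) (t : ℝ) (ht : 0 < t)
    (u₁ u₂ u₁' u₂' : EuclideanSpace ℝ (Fin n) → ℝ)
    (hi₁ : Integrable u₁) (hi₂ : Integrable u₂)
    (hi₁' : Integrable u₁') (hi₂' : Integrable u₂')
    (hsum : ∀ᵐ x ∂(volume : Measure (EuclideanSpace ℝ (Fin n))),
      u₁ x + u₂ x = u₁' x + u₂' x) :
    ((∫ x, u₁' x * gconv n t u₂ x) + (∫ x, u₂' x * gconv n t u₁ x)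
        - (∫ x, u₁' x * gconv n t u₂' x) - ∫ x, u₁ x * gconv n t u₂ x)
      = (∫ x, (u₁' x - u₁ x) * gconv n t (fun y => u₁' y - u₁ y) x) ∧
    0 ≤ ∫ x, (u₁' x - u₁ x) * gconv n t (fun y => u₁' y - u₁ y) x := by
  have hdiff : (fun y => u₁' y - u₁ y) =ᵐ[volume] fun y => u₂ y - u₂' y :=
    hsum.mono fun x hx => by linarith
  have hv : Integrable fun y => u₁' y - u₁ y := hi₁'.sub hi₁
  refine ⟨?_, integral_mul_gconv_self_nonneg ht hv⟩
  rw [integral_sub_mul_gconv ht.le hi₁' hi₁ hv, gconv_congr_ae hdiff,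
    integral_mul_gconv_sub ht.le hi₁' hi₂ hi₂', integral_mul_gconv_sub ht.le hi₁ hi₂ hi₂',
    integral_mul_gconv_comm ht.le hi₂' hi₁]
  ring

/-- for bounded measurable integrable `u₁, u₂, u₁', u₂'` with
`u₁ + u₂ = u₁' + u₂'` a.e. and `t > 0`,
`∫ u₁' (G_t*u₂) + ∫ u₂' (G_t*u₁) − ∫ u₁' (G_t*u₂') − ∫ u₁ (G_t*u₂)
  = ∫ (u₁' − u₁) (G_t * (u₁' − u₁)) ≥ 0`. -/
theorem gaussian_cross_term_identity (n : ℕ) (hn : 1 ≤ n) (t : ℝ) (ht : 0 < t)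
    (u₁ u₂ u₁' u₂' : EuclideanSpace ℝ (Fin n) → ℝ)
    (hm₁ : Measurable u₁) (hm₂ : Measurable u₂) (hm₁' : Measurable u₁') (hm₂' : Measurable u₂')
    (hb₁ : ∃ C, ∀ x, |u₁ x| ≤ C) (hb₂ : ∃ C, ∀ x, |u₂ x| ≤ C)
    (hb₁' : ∃ C, ∀ x, |u₁' x| ≤ C) (hb₂' : ∃ C, ∀ x, |u₂' x| ≤ C)
    (hi₁ : Integrable u₁) (hi₂ : Integrable u₂)
    (hi₁' : Integrable u₁') (hi₂' : Integrable u₂')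
    (hsum : ∀ᵐ x ∂(volume : Measure (EuclideanSpace ℝ (Fin n))),
      u₁ x + u₂ x = u₁' x + u₂' x) :
    ((∫ x, u₁' x * gconv n t u₂ x) + (∫ x, u₂' x * gconv n t u₁ x)
        - (∫ x, u₁' x * gconv n t u₂' x) - ∫ x, u₁ x * gconv n t u₂ x)
      = (∫ x, (u₁' x - u₁ x) * gconv n t (fun y => u₁' y - u₁ y) x) ∧
    0 ≤ ∫ x, (u₁' x - u₁ x) * gconv n t (fun y => u₁' y - u₁ y) x :=
  gaussian_cross_term_identity_general n t ht u₁ u₂ u₁' u₂' hi₁ hi₂ hi₁' hi₂' hsum
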